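/- arXiv:1807.07773 — 3 statements merged into one kernel-verified Lean document; each statement's English description precedes it below -/
import Mathlib

section
/- Let f: ℝ → ℝ be an L-Lipschitz function. Then the map X ↦ Tr f(X), defined on N×N Hermitian matrices via functional calculus, is √N·L-Lipschitz with respect to the Hilbert–Schmidt norm ‖M‖₂ = (Tr M M*)^{1/2}. -/
/-!
Let `U`, `V` be unitaries diagonalising `X` and `Y`, with eigenvalues `λ` and `μ`, and put
`W = U* V`. The matrix `(|W i j|²)` is doubly stochastic, and conjugating `X - Y` by the
unitaries gives `(U* (X - Y) V) i j = (λ i - μ j) W i j`. Hence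
`∑ f (λ i) - ∑ f (μ j) = ∑ i j, |W i j|² (f (λ i) - f (μ j))` and
`‖X - Y‖₂² = ∑ i j, |W i j|² (λ i - μ j)²`, and Cauchy–Schwarz against the weights `|W i j|²`,
whose total mass is `N`, bounds the first sum by `√N L ‖X - Y‖₂`.
-/

open Matrix Finset

section DoublyStochastic

variable {n : Type*} [Fintype n] [DecidableEq n] {M : Matrix n n ℝ}

lemma sum_sub_sum_eq_sum_mul_of_mem_doublyStochastic (hM : M ∈ doublyStochastic ℝ n)
    (x y : n → ℝ) : ∑ i, x i - ∑ j, y j = ∑ i, ∑ j, M i j * (x i - y j) := by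
  simp only [mul_sub, sum_sub_distrib, ← sum_mul]
  rw [sum_comm (f := fun i j => M i j * y j)]
  simp only [← sum_mul, sum_row_of_mem_doublyStochastic hM, sum_col_of_mem_doublyStochastic hM,
    one_mul]

lemma sum_mul_abs_le_of_mem_doublyStochastic (hM : M ∈ doublyStochastic ℝ n) (z : n → n → ℝ) :
    ∑ i, ∑ j, M i j * |z i j| ≤ √(Fintype.card n) * √(∑ i, ∑ j, M i j * z i j ^ 2) := by
  have hM₀ : ∀ p : n × n, 0 ≤ M p.1 p.2 := fun _ => nonneg_of_mem_doublyStochastic hM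
  have hsum : ∑ p : n × n, M p.1 p.2 = Fintype.card n := by
    simp [Fintype.sum_prod_type, sum_row_of_mem_doublyStochastic hM]
  -- Cauchy–Schwarz for the vectors `√M` and `√M |z|`
  have cauchy_schwarz := sum_sq_le_sum_mul_sum_of_sq_le_mul univ
    (r := fun p : n × n => M p.1 p.2 * |z p.1 p.2|) (g := fun p => M p.1 p.2 * z p.1 p.2 ^ 2)
    (fun p _ => hM₀ p) (fun p _ => mul_nonneg (hM₀ p) (sq_nonneg _))
    (fun p _ => le_of_eq (by rw [mul_pow, sq_abs]; ring))
  rw [hsum, Fintype.sum_prod_type, Fintype.sum_prod_type] at cauchy_schwarz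
  rw [← Real.sqrt_mul (Nat.cast_nonneg _)]
  exact Real.le_sqrt_of_sq_le cauchy_schwarz

theorem abs_sum_sub_sum_le_of_mem_doublyStochastic (hM : M ∈ doublyStochastic ℝ n)
    {f : ℝ → ℝ} {L : ℝ} (hf : ∀ a b, |f a - f b| ≤ L * |a - b|) (x y : n → ℝ) :
    |∑ i, f (x i) - ∑ j, f (y j)| ≤
      √(Fintype.card n) * L * √(∑ i, ∑ j, M i j * (x i - y j) ^ 2) := by
  have hL : 0 ≤ L := by simpa using (abs_nonneg _).trans (hf 1 0)
  calc |∑ i, f (x i) - ∑ j, f (y j)|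
      = |∑ i, ∑ j, M i j * (f (x i) - f (y j))| := by
        rw [sum_sub_sum_eq_sum_mul_of_mem_doublyStochastic hM]
    _ ≤ ∑ i, ∑ j, M i j * |f (x i) - f (y j)| := by
        refine (abs_sum_le_sum_abs _ _).trans (sum_le_sum fun i _ => ?_)
        refine (abs_sum_le_sum_abs _ _).trans_eq (sum_congr rfl fun j _ => ?_)
        rw [abs_mul, abs_of_nonneg (nonneg_of_mem_doublyStochastic hM)]
    _ ≤ L * ∑ i, ∑ j, M i j * |x i - y j| := by
        simp only [mul_sum, mul_left_comm L]
        gcongr with i _ j _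
        · exact nonneg_of_mem_doublyStochastic hM
        · exact hf _ _
    _ ≤ L * (√(Fintype.card n) * √(∑ i, ∑ j, M i j * (x i - y j) ^ 2)) := by
        gcongr
        exact sum_mul_abs_le_of_mem_doublyStochastic hM _
    _ = √(Fintype.card n) * L * √(∑ i, ∑ j, M i j * (x i - y j) ^ 2) := by ring

end DoublyStochastic

section Unitary

variable {𝕜 : Type*} [RCLike 𝕜] {m n : Type*} [Fintype n]

lemma mul_conjTranspose_self_apply_self (M : Matrix m n 𝕜) (i : m) :
    (M * Mᴴ) i i = ((∑ j, ‖M i j‖ ^ 2 : ℝ) : 𝕜) := by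
  simp only [mul_apply, conjTranspose_apply, ← starRingEnd_apply, RCLike.mul_conj]
  norm_cast

lemma re_trace_mul_conjTranspose_self [Fintype m] (M : Matrix m n 𝕜) :
    RCLike.re (M * Mᴴ).trace = ∑ i, ∑ j, ‖M i j‖ ^ 2 := by
  simp only [trace, diag_apply, mul_conjTranspose_self_apply_self, map_sum, RCLike.ofReal_re]

lemma trace_unitary_mul_mul_unitary_mul_conjTranspose_self [Fintype m] [DecidableEq m]
    [DecidableEq n] {W : Matrix m m 𝕜} {V : Matrix n n 𝕜} (hW : W ∈ unitaryGroup m 𝕜)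
    (hV : V ∈ unitaryGroup n 𝕜) (M : Matrix m n 𝕜) :
    ((W * M * V) * (W * M * V)ᴴ).trace = (M * Mᴴ).trace := by
  have hV' : V * Vᴴ = 1 := Unitary.mul_star_self_of_mem hV
  have hW' : Wᴴ * W = 1 := Unitary.star_mul_self_of_mem hW
  rw [conjTranspose_mul, conjTranspose_mul, Matrix.mul_assoc, ← Matrix.mul_assoc V, hV',
    Matrix.one_mul, ← Matrix.mul_assoc, trace_mul_cycle, ← Matrix.mul_assoc, hW', Matrix.one_mul]

variable [DecidableEq n]

lemma sum_norm_sq_row_of_mem_unitaryGroup {W : Matrix n n 𝕜} (hW : W ∈ unitaryGroup n 𝕜)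
    (i : n) : ∑ j, ‖W i j‖ ^ 2 = 1 := by
  have h := mul_conjTranspose_self_apply_self W i
  rw [← star_eq_conjTranspose, Unitary.mul_star_self_of_mem hW, one_apply_eq] at h
  exact_mod_cast h.symm

lemma of_norm_sq_mem_doublyStochastic {W : Matrix n n 𝕜} (hW : W ∈ unitaryGroup n 𝕜) :
    of (fun i j => ‖W i j‖ ^ 2) ∈ doublyStochastic ℝ n := by
  refine mem_doublyStochastic_iff_sum.2 ⟨fun i j => sq_nonneg _,
    sum_norm_sq_row_of_mem_unitaryGroup hW, fun j => ?_⟩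
  simpa using sum_norm_sq_row_of_mem_unitaryGroup (Unitary.star_mem hW) j

end Unitary

namespace Matrix.IsHermitian

variable {𝕜 : Type*} [RCLike 𝕜] {n : Type*} [Fintype n] [DecidableEq n]
  {A B : Matrix n n 𝕜}

lemma star_eigenvectorUnitary_mul_mul_eigenvectorUnitary (hA : A.IsHermitian) :
    star (hA.eigenvectorUnitary : Matrix n n 𝕜) * A * (hA.eigenvectorUnitary : Matrix n n 𝕜) =
      diagonal (RCLike.ofReal ∘ hA.eigenvalues) := by
  simpa using hA.conjStarAlgAut_star_eigenvectorUnitary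

lemma mul_eigenvectorUnitary (hA : A.IsHermitian) :
    A * (hA.eigenvectorUnitary : Matrix n n 𝕜) =
      (hA.eigenvectorUnitary : Matrix n n 𝕜) * diagonal (RCLike.ofReal ∘ hA.eigenvalues) := by
  rw [← star_eigenvectorUnitary_mul_mul_eigenvectorUnitary, ← Matrix.mul_assoc,
    ← Matrix.mul_assoc, Unitary.mul_star_self_of_mem hA.eigenvectorUnitary.2, Matrix.one_mul]

lemma star_eigenvectorUnitary_mul (hA : A.IsHermitian) :
    star (hA.eigenvectorUnitary : Matrix n n 𝕜) * A =
      diagonal (RCLike.ofReal ∘ hA.eigenvalues) * star (hA.eigenvectorUnitary : Matrix n n 𝕜) := by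
  rw [← star_eigenvectorUnitary_mul_mul_eigenvectorUnitary, Matrix.mul_assoc _ _ (star _),
    Unitary.mul_star_self_of_mem hA.eigenvectorUnitary.2, Matrix.mul_one]

lemma star_eigenvectorUnitary_mul_sub_mul_eigenvectorUnitary_apply (hA : A.IsHermitian)
    (hB : B.IsHermitian) (i j : n) :
    (star (hA.eigenvectorUnitary : Matrix n n 𝕜) * (A - B) * hB.eigenvectorUnitary) i j =
      ((hA.eigenvalues i - hB.eigenvalues j : ℝ) : 𝕜) *
        (star (hA.eigenvectorUnitary : Matrix n n 𝕜) * hB.eigenvectorUnitary) i j := by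
  rw [Matrix.mul_sub, Matrix.sub_mul, star_eigenvectorUnitary_mul, Matrix.mul_assoc _ B,
    hB.mul_eigenvectorUnitary, Matrix.mul_assoc, ← Matrix.mul_assoc _ _ (diagonal _)]
  simp only [sub_apply, diagonal_mul, mul_diagonal, Function.comp_apply, RCLike.ofReal_sub]
  ring

lemma re_trace_sub_mul_conjTranspose_sub (hA : A.IsHermitian) (hB : B.IsHermitian) :
    RCLike.re ((A - B) * (A - B)ᴴ).trace =
      ∑ i, ∑ j, ‖(star (hA.eigenvectorUnitary : Matrix n n 𝕜) * hB.eigenvectorUnitary) i j‖ ^ 2 *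
        (hA.eigenvalues i - hB.eigenvalues j) ^ 2 := by
  rw [← trace_unitary_mul_mul_unitary_mul_conjTranspose_self (star hA.eigenvectorUnitary).2
    hB.eigenvectorUnitary.2, re_trace_mul_conjTranspose_self]
  simp only [Unitary.coe_star, star_eigenvectorUnitary_mul_sub_mul_eigenvectorUnitary_apply hA hB,
    norm_mul, mul_pow, RCLike.norm_ofReal, sq_abs, mul_comm]

theorem abs_sum_eigenvalues_sub_sum_eigenvalues_le (hA : A.IsHermitian) (hB : B.IsHermitian)
    {f : ℝ → ℝ} {L : ℝ} (hf : ∀ a b, |f a - f b| ≤ L * |a - b|) :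
    |∑ i, f (hA.eigenvalues i) - ∑ i, f (hB.eigenvalues i)| ≤
      √(Fintype.card n) * L * √(RCLike.re ((A - B) * (A - B)ᴴ).trace) := by
  rw [hA.re_trace_sub_mul_conjTranspose_sub hB]
  exact abs_sum_sub_sum_le_of_mem_doublyStochastic (of_norm_sq_mem_doublyStochastic
    (mul_mem (star hA.eigenvectorUnitary).2 hB.eigenvectorUnitary.2)) hf _ _

end Matrix.IsHermitian

theorem trace_funcCalc_lipschitz_general (N : ℕ) (f : ℝ → ℝ) (L : ℝ)
    (hf : ∀ a b : ℝ, |f a - f b| ≤ L * |a - b|)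
    (X Y : Matrix (Fin N) (Fin N) ℂ) (hX : X.IsHermitian) (hY : Y.IsHermitian) :
    |(∑ i, f (hX.eigenvalues i)) - ∑ i, f (hY.eigenvalues i)| ≤
      Real.sqrt N * L * Real.sqrt (((X - Y) * (X - Y)ᴴ).trace.re) := by
  simpa using hX.abs_sum_eigenvalues_sub_sum_eigenvalues_le hY hf

/-- Let `f : ℝ → ℝ` be `L`-Lipschitz. Then `X ↦ Tr f(X)` on `N × N` Hermitian matrices,
where `Tr f(X) = Σᵢ f(λᵢ(X))`, is `√N · L`-Lipschitz with respect to the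
Hilbert–Schmidt norm `‖M‖₂ = (Tr M M*)^{1/2}`. -/
theorem trace_funcCalc_lipschitz (N : ℕ) (f : ℝ → ℝ) (L : ℝ) (hL : 0 ≤ L)
    (hf : ∀ a b : ℝ, |f a - f b| ≤ L * |a - b|)
    (X Y : Matrix (Fin N) (Fin N) ℂ) (hX : X.IsHermitian) (hY : Y.IsHermitian) :
    |(∑ i, f (hX.eigenvalues i)) - ∑ i, f (hY.eigenvalues i)| ≤
      Real.sqrt N * L * Real.sqrt (((X - Y) * (X - Y)ᴴ).trace.re) :=
  trace_funcCalc_lipschitz_general N f L hf X Y hX hY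
end

section
/- Let g be the Stieltjes transform of a compactly supported probability measure ν on ℝ, and let θ ∈ ℝ \ supp(ν) satisfy ∫ (θ−x)^{-2} dν(x) < 1/σ². Define φ(z) = z + σ² g(z) and ρ = φ(θ). Then the residue at z = ρ of the function z ↦ 1/(z − σ² g_λ(z) − θ)², where g_λ is a function holomorphic near ρ satisfying g_λ(φ(w)) = g(w) for w near θ (i.e. the inverse relation ω(z) = z − σ² g_λ(z) satisfies φ(ω(z)) = z), equals φ''(θ) = σ² g''(θ). -/
/-!
Let `ω` be the local inverse of `φ` at `θ`, so that `h = ω - θ` satisfies `h ∘ φ = id - θ` near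
`θ`. Then `h` has a simple zero at `ρ = φ θ`, and the residue of `1 / h²` there is
`-h''(ρ) / h'(ρ)³`. Differentiating `h ∘ φ = id - θ` once and twice gives `h'(ρ) φ'(θ) = 1` and
`h''(ρ) φ'(θ)² + h'(ρ) φ''(θ) = 0`, so the residue equals `φ''(θ) = σ² g''(θ)`. All the functions
involved are holomorphic where needed: `g` because `θ` stays at positive distance from the support
of `ν`, and `h` by assumption on `g_λ`.
-/

open MeasureTheory Metric Filter Set Complex Topology Real

section DerivativeIdentities

variable {𝕜 : Type*} [NontriviallyNormedField 𝕜] {k φ h : 𝕜 → 𝕜} {a b c : 𝕜}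

theorem deriv_sub_mul_at_center (hk : DifferentiableAt 𝕜 k c) :
    deriv (fun z => (z - c) * k z) c = k c := by
  simpa using (((hasDerivAt_id c).sub_const c).fun_mul hk.hasDerivAt).deriv

theorem deriv_deriv_sub_mul_at_center [CompleteSpace 𝕜] (hk : AnalyticAt 𝕜 k c) :
    deriv (deriv fun z => (z - c) * k z) c = 2 * deriv k c := by
  have hderiv : deriv (fun z => (z - c) * k z) =ᶠ[𝓝 c] fun z => k z + (z - c) * deriv k z := by
    filter_upwards [hk.eventually_analyticAt] with z hz
    simpa using (((hasDerivAt_id z).sub_const c).fun_mul hz.differentiableAt.hasDerivAt).deriv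
  rw [hderiv.deriv_eq]
  simpa [two_mul] using (hk.differentiableAt.hasDerivAt.fun_add
    (((hasDerivAt_id c).sub_const c).fun_mul hk.deriv.differentiableAt.hasDerivAt)).deriv

theorem deriv_mul_deriv_eq_one_of_comp_eventuallyEq (hφ : DifferentiableAt 𝕜 φ a)
    (hh : DifferentiableAt 𝕜 h (φ a)) (hcomp : (fun w => h (φ w)) =ᶠ[𝓝 a] fun w => w - b) :
    deriv h (φ a) * deriv φ a = 1 :=
  calc deriv h (φ a) * deriv φ a = deriv (fun w => h (φ w)) a := (deriv_comp a hh hφ).symm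
    _ = 1 := by simp [hcomp.deriv_eq]

theorem deriv_deriv_mul_add_of_comp_eventuallyEq [CompleteSpace 𝕜] (hφ : AnalyticAt 𝕜 φ a)
    (hh : AnalyticAt 𝕜 h (φ a)) (hcomp : (fun w => h (φ w)) =ᶠ[𝓝 a] fun w => w - b) :
    deriv (deriv h) (φ a) * deriv φ a ^ 2 + deriv h (φ a) * deriv (deriv φ) a = 0 := by
  have hone : (fun w => deriv h (φ w) * deriv φ w) =ᶠ[𝓝 a] fun _ => 1 := by
    filter_upwards [hcomp.eventually_nhds, hφ.eventually_analyticAt,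
      hφ.continuousAt.tendsto.eventually hh.eventually_analyticAt] with w hw hφw hhw
    exact deriv_mul_deriv_eq_one_of_comp_eventuallyEq hφw.differentiableAt hhw.differentiableAt hw
  have hderiv : HasDerivAt (fun w => deriv h (φ w) * deriv φ w)
      (deriv (deriv h) (φ a) * deriv φ a * deriv φ a + deriv h (φ a) * deriv (deriv φ) a) a :=
    (hh.deriv.differentiableAt.hasDerivAt.comp a
      hφ.differentiableAt.hasDerivAt).fun_mul hφ.deriv.differentiableAt.hasDerivAt
  rw [← hone.deriv_eq.trans (deriv_const a 1), hderiv.deriv]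
  ring

end DerivativeIdentities

section Residue

theorem eventually_circleIntegral_sub_sq_inv_smul {E : Type*} [NormedAddCommGroup E]
    [NormedSpace ℂ E] [CompleteSpace E] {f : ℂ → E} {c : ℂ}
    (hf : ∀ᶠ z in 𝓝 c, DifferentiableAt ℂ f z) :
    ∀ᶠ ε in 𝓝[>] (0 : ℝ),
      (∮ z in C(c, ε), ((z - c) ^ 2)⁻¹ • f z) = (2 * π * I : ℂ) • deriv f c := by
  obtain ⟨U, hUf, hUo, hcU⟩ := _root_.mem_nhds_iff.mp hf
  obtain ⟨r, hr, hrU⟩ := nhds_basis_closedBall.mem_iff.mp (hUo.mem_nhds hcU)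
  filter_upwards [Ioc_mem_nhdsGT hr] with ε ⟨hε, hεr⟩
  rw [← two_pi_I_inv_smul_circleIntegral_sub_sq_inv_smul_of_differentiable hUo
    ((closedBall_subset_closedBall hεr).trans hrU) (fun z hz => (hUf hz).differentiableWithinAt)
    (mem_ball_self hε), smul_inv_smul₀ two_pi_I_ne_zero]

theorem eventually_circleIntegral_inv_sq_of_deriv_ne_zero {h : ℂ → ℂ} {c : ℂ}
    (hh : AnalyticAt ℂ h c) (h0 : h c = 0) (h1 : deriv h c ≠ 0) :
    ∀ᶠ ε in 𝓝[>] (0 : ℝ),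
      (∮ z in C(c, ε), (h z ^ 2)⁻¹) = 2 * π * I * (-deriv (deriv h) c / deriv h c ^ 3) := by
  set k := dslope h c
  have hfac : h = fun z => (z - c) * k z :=
    funext fun z => by simpa [h0] using (sub_smul_dslope h c z).symm
  have hk : AnalyticAt ℂ k c := by
    obtain ⟨p, hp⟩ := hh
    exact ⟨p.fslope, hp.has_fpower_series_dslope_fslope⟩
  have hkc : deriv h c = k c := hfac ▸ deriv_sub_mul_at_center hk.differentiableAt
  have hkc0 : k c ≠ 0 := hkc ▸ h1
  have hk' : deriv (deriv h) c = 2 * deriv k c := hfac ▸ deriv_deriv_sub_mul_at_center hk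
  have hdiff : ∀ᶠ z in 𝓝 c, DifferentiableAt ℂ (fun z => (k z ^ 2)⁻¹) z := by
    filter_upwards [hk.eventually_analyticAt, hk.continuousAt.eventually_ne hkc0] with z hz hz0
    exact (hz.differentiableAt.pow 2).inv (pow_ne_zero 2 hz0)
  have hderiv := (hk.differentiableAt.hasDerivAt.fun_pow 2).fun_inv (pow_ne_zero 2 hkc0)
  filter_upwards [eventually_circleIntegral_sub_sq_inv_smul hdiff] with ε hε
  have hsplit : ∀ z, (h z ^ 2)⁻¹ = ((z - c) ^ 2)⁻¹ • (k z ^ 2)⁻¹ := fun z => by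
    rw [hfac, smul_eq_mul, mul_pow, mul_inv]
  simp_rw [hsplit, hε, hderiv.deriv, hk', hkc, smul_eq_mul]
  field_simp
  ring

/-- Here `h = ω - a` for a local inverse `ω` of `φ` at `a`. -/
theorem eventually_circleIntegral_inv_sq_of_comp_eventuallyEq {φ h : ℂ → ℂ} {a : ℂ}
    (hφ : AnalyticAt ℂ φ a) (hh : AnalyticAt ℂ h (φ a))
    (hcomp : (fun w => h (φ w)) =ᶠ[𝓝 a] fun w => w - a) :
    ∀ᶠ ε in 𝓝[>] (0 : ℝ),
      (∮ z in C(φ a, ε), (h z ^ 2)⁻¹) = 2 * π * I * deriv (deriv φ) a := by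
  have hone := deriv_mul_deriv_eq_one_of_comp_eventuallyEq hφ.differentiableAt
    hh.differentiableAt hcomp
  have htwo := deriv_deriv_mul_add_of_comp_eventuallyEq hφ hh hcomp
  have hne : deriv h (φ a) ≠ 0 := left_ne_zero_of_mul_eq_one hone
  have hzero : h (φ a) = 0 := by simpa using hcomp.self_of_nhds
  filter_upwards [eventually_circleIntegral_inv_sq_of_deriv_ne_zero hh hzero hne] with ε hε
  rw [hε]
  congr 1
  field_simp
  linear_combination (-deriv h (φ a) ^ 2) * htwo
    + deriv (deriv h) (φ a) * (deriv h (φ a) * deriv φ a + 1) * hone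

end Residue

section Stieltjes

theorem half_le_norm_sub_of_mem_ball {E : Type*} [SeminormedAddCommGroup E] {z w x : E} {δ : ℝ}
    (hw : w ∈ ball z (δ / 2)) (hx : δ ≤ ‖z - x‖) : δ / 2 ≤ ‖w - x‖ := by
  rw [mem_ball, dist_eq_norm] at hw
  linarith [norm_sub_le_norm_sub_add_norm_sub z w x, norm_sub_rev z w]

variable {ν : Measure ℝ} [IsFiniteMeasure ν]

theorem hasDerivAt_integral_sub_inv {z : ℂ} {δ : ℝ} (hδ : 0 < δ)
    (hz : ∀ᵐ x : ℝ ∂ν, δ ≤ ‖z - x‖) :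
    HasDerivAt (fun w : ℂ => ∫ x, (w - x)⁻¹ ∂ν) (∫ x, -((z - x) ^ 2)⁻¹ ∂ν) z := by
  have hδ2 : 0 < δ / 2 := half_pos hδ
  have hmeas : ∀ w : ℂ, AEStronglyMeasurable (fun x : ℝ => (w - x)⁻¹) ν := fun w =>
    (measurable_const.sub measurable_ofReal).inv.aestronglyMeasurable
  refine (hasDerivAt_integral_of_dominated_loc_of_deriv_le
    (F' := fun w (x : ℝ) => -((w - x) ^ 2)⁻¹) (bound := fun _ => ((δ / 2)⁻¹) ^ 2)
    (ball_mem_nhds z hδ2) (.of_forall hmeas) ?_ ?_ ?_ (integrable_const _) ?_).2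
  · refine (integrable_const δ⁻¹).mono' (hmeas z) ?_
    filter_upwards [hz] with x hx
    rw [norm_inv]
    exact inv_anti₀ hδ hx
  · exact ((measurable_const.sub measurable_ofReal).pow_const 2).inv.neg.aestronglyMeasurable
  · filter_upwards [hz] with x hx w hw
    rw [norm_neg, norm_inv, norm_pow, ← inv_pow]
    gcongr
    exact half_le_norm_sub_of_mem_ball hw hx
  · filter_upwards [hz] with x hx w hw
    have hwx : w - x ≠ 0 := norm_pos_iff.mp (hδ2.trans_le (half_le_norm_sub_of_mem_ball hw hx))
    simpa [neg_div] using ((hasDerivAt_id w).sub_const (x : ℂ)).fun_inv hwx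

theorem analyticAt_integral_sub_inv {z : ℂ} (hz : ∃ d > 0, ∀ᵐ x : ℝ ∂ν, d ≤ ‖z - x‖) :
    AnalyticAt ℂ (fun w : ℂ => ∫ x, (w - x)⁻¹ ∂ν) z := by
  obtain ⟨d, hd, hz⟩ := hz
  refine DifferentiableOn.analyticAt (fun w hw => ?_) (ball_mem_nhds z (half_pos hd))
  refine (hasDerivAt_integral_sub_inv (half_pos hd) ?_).differentiableAt.differentiableWithinAt
  filter_upwards [hz] with x hx using half_le_norm_sub_of_mem_ball hw hx

end Stieltjes

theorem residue_outlier_function_general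
    (ν : Measure ℝ) [IsProbabilityMeasure ν]
    (K : Set ℝ) (hKν : ν Kᶜ = 0)
    (σ : ℝ)
    (θ : ℝ) (hθ : ∃ d > 0, ∀ x ∈ K, d ≤ |θ - x|)
    (g : ℂ → ℂ) (hg : g = fun z => ∫ x : ℝ, (z - (x : ℂ))⁻¹ ∂ν)
    (φ : ℂ → ℂ) (hφ : φ = fun z => z + (σ : ℂ) ^ 2 * g z)
    (ρ : ℂ) (hρ : ρ = φ (θ : ℂ))
    (gl : ℂ → ℂ) (hgl : ∃ V ∈ nhds ρ, DifferentiableOn ℂ gl V)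
    (hinv : ∀ᶠ w in nhds (θ : ℂ), gl (φ w) = g w) :
    ∀ᶠ ε in nhdsWithin (0 : ℝ) (Set.Ioi 0),
      (∮ z in C(ρ, ε), ((z - (σ : ℂ) ^ 2 * gl z - (θ : ℂ)) ^ 2)⁻¹) =
        2 * Real.pi * Complex.I * ((σ : ℂ) ^ 2 * iteratedDeriv 2 g (θ : ℂ)) := by
  obtain ⟨d, hd, hdK⟩ := hθ
  have hg_an : AnalyticAt ℂ g θ := hg ▸ analyticAt_integral_sub_inv ⟨d, hd, by
    filter_upwards [mem_ae_iff.mpr hKν] with x hx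
    simpa [← ofReal_sub] using hdK x hx⟩
  have hφ_an : AnalyticAt ℂ φ θ := hφ ▸ analyticAt_id.add (analyticAt_const.mul hg_an)
  obtain ⟨V, hV, hgl_diff⟩ := hgl
  have hh_an : AnalyticAt ℂ (fun z => z - (σ : ℂ) ^ 2 * gl z - θ) (φ θ) :=
    hρ ▸ (analyticAt_id.sub (analyticAt_const.mul (hgl_diff.analyticAt hV))).sub analyticAt_const
  have hcomp : (fun w => φ w - (σ : ℂ) ^ 2 * gl (φ w) - θ) =ᶠ[𝓝 (θ : ℂ)] fun w => w - θ := by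
    filter_upwards [hinv] with w hw
    rw [hw, hφ]
    ring
  have hφ'' : iteratedDeriv 2 φ θ = (σ : ℂ) ^ 2 * iteratedDeriv 2 g θ := by
    rw [hφ, iteratedDeriv_fun_add (f := fun z => z) (g := fun z => (σ : ℂ) ^ 2 * g z)
      contDiffAt_id (analyticAt_const.mul hg_an).contDiffAt,
      iteratedDeriv_fun_id, iteratedDeriv_const_mul_field]
    simp
  rw [iteratedDeriv_succ, iteratedDeriv_one] at hφ''
  rw [hρ, ← hφ'']
  exact eventually_circleIntegral_inv_sq_of_comp_eventuallyEq hφ_an hh_an hcomp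

/-- Let `g` be the Stieltjes transform of a compactly supported probability measure `ν`
on ℝ, and `θ ∈ ℝ \ supp ν` with `∫ (θ−x)⁻² dν < 1/σ²`. Set `φ(z) = z + σ² g(z)` and
`ρ = φ(θ)`. If `g_λ` is holomorphic near `ρ` and satisfies `g_λ(φ(w)) = g(w)` for `w`
near `θ`, then the residue of `z ↦ 1/(z − σ² g_λ(z) − θ)²` at `ρ` equals
`φ''(θ) = σ² g''(θ)` (the residue being characterized by small circle integrals). -/
theorem residue_outlier_function
    (ν : Measure ℝ) [IsProbabilityMeasure ν]
    (K : Set ℝ) (hKc : IsCompact K) (hKν : ν Kᶜ = 0)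
    (σ : ℝ) (hσ : 0 < σ)
    (θ : ℝ) (hθ : ∃ d > 0, ∀ x ∈ K, d ≤ |θ - x|)
    (hout : ∫ x, ((θ - x)⁻¹) ^ 2 ∂ν < 1 / σ ^ 2)
    (g : ℂ → ℂ) (hg : g = fun z => ∫ x : ℝ, (z - (x : ℂ))⁻¹ ∂ν)
    (φ : ℂ → ℂ) (hφ : φ = fun z => z + (σ : ℂ) ^ 2 * g z)
    (ρ : ℂ) (hρ : ρ = φ (θ : ℂ))
    (gl : ℂ → ℂ) (hgl : ∃ V ∈ nhds ρ, DifferentiableOn ℂ gl V)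
    (hinv : ∀ᶠ w in nhds (θ : ℂ), gl (φ w) = g w) :
    ∀ᶠ ε in nhdsWithin (0 : ℝ) (Set.Ioi 0),
      (∮ z in C(ρ, ε), ((z - (σ : ℂ) ^ 2 * gl z - (θ : ℂ)) ^ 2)⁻¹) =
        2 * Real.pi * Complex.I * ((σ : ℂ) ^ 2 * iteratedDeriv 2 g (θ : ℂ)) :=
  residue_outlier_function_general ν K hKν σ θ hθ g hg φ hφ ρ hρ gl hgl hinv
end

section
/- Let μ be a probability measure on ℝ^M satisfying the Poincaré inequality with constant C, and let F: ℝ^M → ℝ be Lipschitz with constant |F|_Lip. Then there exist universal constants K₁, K₂ > 0 such that for all ε > 0, μ(|F − E_μ F| > ε) ≤ K₁ exp(−ε / (K₂ √C |F|_Lip)). -/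
/-!
Gromov–Milman. Fix a level `a` and a step `h` of order `√(C M) L`. Apply the Poincaré
inequality to a differentiable cutoff `f` which vanishes near `{F ≤ a}` and equals `1` on
`{F ≥ a + h}`: its variance is at least `μ(F > a + h) - μ(F > a)²`, while its energy is at most
`C M (2L/h)² μ(F > a) ≤ μ(F > a) / 4`. Hence the tail `p t = μ(F > t)` satisfies
`p (a + h) ≤ p a * (p a + 1/4)`, so from a level where `p ≤ 1/2` on, it decays by a factor `3/4`
per step `h`, i.e. exponentially at rate `log (4/3) / h`. The same applies to `-F`.
-/

open MeasureTheory

/-- A probability measure `μ` on `ℝ^M` satisfies the Poincaré inequality with constant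
`C`: for any differentiable `f` with `f` and its gradient in `L²(μ)`,
`Var(f) ≤ C ∫ ‖grad f‖² dμ`. -/
def PoincareIneqPi (M : ℕ) (μ : Measure (Fin M → ℝ)) (C : ℝ) : Prop :=
  ∀ f : (Fin M → ℝ) → ℝ, Differentiable ℝ f →
    MemLp f 2 μ →
    MemLp (fun x => Real.sqrt (∑ i, ‖fderiv ℝ f x (Pi.single i 1)‖ ^ 2)) 2 μ →
    ∫ x, ‖f x - ∫ y, f y ∂μ‖ ^ 2 ∂μ ≤ C * ∫ x, (∑ i, ‖fderiv ℝ f x (Pi.single i 1)‖ ^ 2) ∂μ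

open Metric Set Filter ContinuousLinearMap ProbabilityTheory
open scoped Convolution Topology NNReal ENNReal

namespace ContDiffBump

variable {E : Type*} [NormedAddCommGroup E] [NormedSpace ℝ E] [FiniteDimensional ℝ E]
  [MeasurableSpace E] [BorelSpace E] {μ : Measure E} [μ.IsAddHaarMeasure]
  (φ : ContDiffBump (0 : E)) {g : E → ℝ}

theorem normed_convolution_mem_Icc (hg : Continuous g) {a b : ℝ} (hab : ∀ x, g x ∈ Icc a b)
    (x : E) : (φ.normed μ ⋆[lsmul ℝ ℝ, μ] g) x ∈ Icc a b := by
  have hdist : ∀ y, dist (g y) ((a + b) / 2) ≤ (b - a) / 2 := fun y => by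
    rw [Real.dist_eq, abs_le]; constructor <;> linarith [(hab y).1, (hab y).2]
  have h := dist_convolution_le (μ := μ) (x₀ := x) (by linarith [(hab x).1, (hab x).2])
    φ.support_normed_eq.subset φ.nonneg_normed φ.integral_normed hg.aestronglyMeasurable
    fun y _ => hdist y
  rw [Real.dist_eq, abs_le] at h
  constructor <;> linarith [h.1, h.2]

theorem lipschitzWith_normed_convolution {K : ℝ≥0} (hg : LipschitzWith K g) :
    LipschitzWith K (φ.normed μ ⋆[lsmul ℝ ℝ, μ] g) := by
  refine LipschitzWith.of_dist_le_mul fun x y => ?_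
  have hint : ∀ z, Integrable (fun t => φ.normed μ t • g (z - t)) μ := fun z =>
    (φ.hasCompactSupport_normed.convolutionExists_left_of_continuous_right (lsmul ℝ ℝ)
      φ.integrable_normed.locallyIntegrable hg.continuous z).integrable
  rw [dist_eq_norm, convolution_def, convolution_def]
  simp only [lsmul_apply]
  rw [← integral_sub (hint x) (hint y)]
  calc ‖∫ t, φ.normed μ t • g (x - t) - φ.normed μ t • g (y - t) ∂μ‖
      ≤ ∫ t, φ.normed μ t * (K * dist x y) ∂μ := by
        refine norm_integral_le_of_norm_le (φ.integrable_normed.mul_const _)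
          (Eventually.of_forall fun t => ?_)
        rw [← smul_sub, norm_smul, Real.norm_of_nonneg (φ.nonneg_normed t), ← dist_eq_norm,
          ← dist_sub_right x y t]
        exact mul_le_mul_of_nonneg_left (hg.dist_le_mul _ _) (φ.nonneg_normed t)
    _ = K * dist x y := by rw [integral_mul_const, φ.integral_normed, one_mul]

end ContDiffBump

theorem LipschitzWith.exists_differentiable_cutoff {E : Type*} [NormedAddCommGroup E]
    [NormedSpace ℝ E] [FiniteDimensional ℝ E] {K : ℝ≥0} {G : E → ℝ} (hG : LipschitzWith K G)
    (a : ℝ) {h : ℝ} (hh : 0 < h) :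
    ∃ f : E → ℝ, Differentiable ℝ f ∧ (∀ x, ‖fderiv ℝ f x‖ ≤ 2 / h * K) ∧
      (∀ x, f x ∈ Icc 0 1) ∧ (∀ x, G x ≤ a → f =ᶠ[𝓝 x] 0) ∧ (∀ x, a + h ≤ G x → f x = 1) := by
  borelize E
  -- a ramp of `G` from level `a + h / 4` to level `a + 3 * h / 4`, mollified at a scale `δ`
  -- on which `G` moves by at most `h / 8`
  set ramp : E → ℝ := fun x => max 0 (min 1 (2 / h * (G x - (a + h / 4)))) with hramp
  have hramp_lip : LipschitzWith (Real.toNNReal (2 / h) * K) ramp := by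
    refine ((LipschitzWith.of_dist_le_mul fun x y => ?_).const_min 1).const_max 0
    rw [Real.dist_eq, ← mul_sub, sub_sub_sub_cancel_right, abs_mul, NNReal.coe_mul,
      Real.coe_toNNReal _ (by positivity), abs_of_pos (by positivity), mul_assoc, ← Real.dist_eq]
    exact mul_le_mul_of_nonneg_left (hG.dist_le_mul x y) (by positivity)
  obtain ⟨δ, hδ, hKδ⟩ : ∃ δ > 0, K * δ ≤ h / 8 := by
    refine ⟨h / (8 * (K + 1)), by positivity, ?_⟩
    rw [mul_div_assoc', div_le_div_iff₀ (by positivity) (by norm_num)]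
    nlinarith [K.coe_nonneg]
  have hG_ball : ∀ x, ∀ y ∈ ball x δ, |G y - G x| ≤ h / 8 := fun x y hy =>
    (hG.dist_le_mul_of_le (mem_ball.1 hy).le).trans hKδ
  let φ : ContDiffBump (0 : E) := ⟨δ / 2, δ, half_pos hδ, half_lt_self hδ⟩
  set ν : Measure E := Measure.addHaar
  have hmollified_eq : ∀ x c, (∀ y ∈ ball x δ, ramp y = c) → (φ.normed ν ⋆[lsmul ℝ ℝ, ν] ramp) x = c :=
    fun x c hc => by
      rw [φ.normed_convolution_eq_right fun y hy => (hc y hy).trans (hc x (mem_ball_self hδ)).symm]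
      exact hc x (mem_ball_self hδ)
  refine ⟨φ.normed ν ⋆[lsmul ℝ ℝ, ν] ramp, ?_, fun x => ?_,
    φ.normed_convolution_mem_Icc hramp_lip.continuous fun x =>
      ⟨le_max_left _ _, max_le zero_le_one (min_le_left _ _)⟩,
    fun x hx => ?_, fun x hx => hmollified_eq x 1 fun y hy => ?_⟩
  · exact (φ.hasCompactSupport_normed.contDiff_convolution_left (n := 1) _ φ.contDiff_normed
      hramp_lip.continuous.locallyIntegrable).differentiable one_ne_zero
  · have := norm_fderiv_le_of_lipschitz ℝ (x₀ := x)
      (φ.lipschitzWith_normed_convolution (μ := ν) hramp_lip)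
    rwa [NNReal.coe_mul, Real.coe_toNNReal _ (by positivity)] at this
  · have hU : IsOpen {y | G y < a + h / 8} := isOpen_lt hG.continuous continuous_const
    filter_upwards [hU.mem_nhds (show G x < a + h / 8 by linarith)] with z (hz : G z < a + h / 8)
    refine hmollified_eq z 0 fun y hy => ?_
    have := (abs_le.1 (hG_ball z y hy)).2
    have : 2 / h * (G y - (a + h / 4)) ≤ 0 :=
      mul_nonpos_of_nonneg_of_nonpos (by positivity) (by linarith)
    simp [hramp, this]
  · have := (abs_le.1 (hG_ball x y hy)).1
    have : 1 ≤ 2 / h * (G y - (a + h / 4)) := by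
      rw [div_mul_eq_mul_div, le_div_iff₀ hh]; linarith
    simp [hramp, this]

theorem MeasureTheory.memLp_of_forall_mem_Icc_zero_one {Ω : Type*} [MeasurableSpace Ω]
    {μ : Measure Ω} [IsFiniteMeasure μ] {f : Ω → ℝ} (hf : AEStronglyMeasurable f μ)
    (hf01 : ∀ x, f x ∈ Icc 0 1) (p : ℝ≥0∞) : MemLp f p μ :=
  MemLp.of_bound hf 1 (ae_of_all _ fun x => by
    rw [Real.norm_of_nonneg (hf01 x).1]; exact (hf01 x).2)

theorem measureReal_sub_sq_le_variance {Ω : Type*} [MeasurableSpace Ω] {μ : Measure Ω}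
    [IsProbabilityMeasure μ] {f : Ω → ℝ} (hf : AEStronglyMeasurable f μ)
    (hf01 : ∀ x, f x ∈ Icc 0 1) {S T : Set Ω} (hS : MeasurableSet S) (hT : MeasurableSet T)
    (hfS : ∀ x ∉ S, f x = 0) (hfT : ∀ x ∈ T, f x = 1) :
    μ.real T - μ.real S ^ 2 ≤ variance f μ := by
  have hf2 := memLp_of_forall_mem_Icc_zero_one hf hf01 2
  have hmean_le : μ[f] ≤ μ.real S := by
    rw [← integral_indicator_one hS]
    refine integral_mono (hf2.integrable one_le_two) ((integrable_const 1).indicator hS)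
      fun x => ?_
    by_cases hx : x ∈ S
    · simpa [hx] using (hf01 x).2
    · simp [hx, hfS x hx]
  have hsq_ge : μ.real T ≤ μ[f ^ 2] := by
    rw [← integral_indicator_one hT]
    refine integral_mono ((integrable_const 1).indicator hT) hf2.integrable_sq fun x => ?_
    by_cases hx : x ∈ T
    · simp [hx, hfT x hx]
    · simp [hx, sq_nonneg]
  have hmean_nonneg : 0 ≤ μ[f] := integral_nonneg fun x => (hf01 x).1
  rw [variance_eq_sub hf2]
  nlinarith

namespace PoincareIneqPi

variable {M : ℕ} {μ : Measure (Fin M → ℝ)} [IsProbabilityMeasure μ] {C : ℝ}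

theorem variance_le (hPI : PoincareIneqPi M μ C) (hC : 0 ≤ C) {f : (Fin M → ℝ) → ℝ}
    (hf : Differentiable ℝ f) (hf2 : MemLp f 2 μ) {B : ℝ} (hB : ∀ x, ‖fderiv ℝ f x‖ ≤ B)
    {S : Set (Fin M → ℝ)} (hS : MeasurableSet S) (hfS : ∀ x ∉ S, fderiv ℝ f x = 0) :
    variance f μ ≤ C * (M * B ^ 2) * μ.real S := by
  set energy : (Fin M → ℝ) → ℝ := fun x => ∑ i, ‖fderiv ℝ f x (Pi.single i 1)‖ ^ 2
  have henergy_meas : Measurable energy := by fun_prop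
  have henergy_le : ∀ x, energy x ≤ M * B ^ 2 := fun x => by
    have hpartial : ∀ i, ‖fderiv ℝ f x (Pi.single i 1)‖ ≤ B := fun i => by
      simpa [Pi.norm_single] using (fderiv ℝ f x).le_of_opNorm_le (hB x) (Pi.single i (1 : ℝ))
    calc energy x ≤ ∑ _i : Fin M, B ^ 2 :=
          Finset.sum_le_sum fun i _ => pow_le_pow_left₀ (norm_nonneg _) (hpartial i) 2
      _ = M * B ^ 2 := by simp
  have henergy_le_indicator : ∀ x, energy x ≤ S.indicator (fun _ => (M * B ^ 2 : ℝ)) x :=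
    fun x => by
      by_cases hx : x ∈ S
      · simpa [hx] using henergy_le x
      · simp [energy, hx, hfS x hx]
  have hgrad : MemLp (fun x => Real.sqrt (energy x)) 2 μ :=
    MemLp.of_bound henergy_meas.sqrt.aestronglyMeasurable (Real.sqrt (M * B ^ 2))
      (ae_of_all _ fun x => by
        rw [Real.norm_of_nonneg (Real.sqrt_nonneg _)]
        exact Real.sqrt_le_sqrt (henergy_le x))
  have henergy_int : Integrable energy μ :=
    (integrable_const (M * B ^ 2 : ℝ)).mono' henergy_meas.aestronglyMeasurable
      (ae_of_all _ fun x => by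
        rw [Real.norm_of_nonneg (Finset.sum_nonneg fun i _ => sq_nonneg _)]
        exact henergy_le x)
  calc variance f μ = ∫ x, ‖f x - ∫ y, f y ∂μ‖ ^ 2 ∂μ := by
        simp only [variance_eq_integral hf.continuous.aemeasurable, Real.norm_eq_abs, sq_abs]
    _ ≤ C * ∫ x, energy x ∂μ := hPI f hf hf2 hgrad
    _ ≤ C * ∫ x, S.indicator (fun _ => (M * B ^ 2 : ℝ)) x ∂μ :=
        mul_le_mul_of_nonneg_left
          (integral_mono henergy_int ((integrable_const _).indicator hS) henergy_le_indicator) hC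
    _ = C * (M * B ^ 2) * μ.real S := by
        rw [integral_indicator_const _ hS, smul_eq_mul, mul_assoc, mul_comm (μ.real S)]

variable {K : ℝ≥0} {G : (Fin M → ℝ) → ℝ} {h : ℝ}

theorem measureReal_lt_add_le (hPI : PoincareIneqPi M μ C) (hC : 0 ≤ C) (hG : LipschitzWith K G)
    (hh : 0 < h) (hKh : 16 * C * M * K ^ 2 ≤ h ^ 2) (a : ℝ) :
    μ.real {x | a + h < G x} ≤ μ.real {x | a < G x} * (μ.real {x | a < G x} + 1 / 4) := by
  obtain ⟨f, hf, hfB, hf01, hf0, hf1⟩ := hG.exists_differentiable_cutoff a hh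
  have hS : MeasurableSet {x | a < G x} :=
    measurableSet_lt measurable_const hG.continuous.measurable
  have hT : MeasurableSet {x | a + h < G x} :=
    measurableSet_lt measurable_const hG.continuous.measurable
  have hlower := measureReal_sub_sq_le_variance (μ := μ) hf.continuous.aestronglyMeasurable hf01
    hS hT (fun x hx => (hf0 x (not_lt.1 hx)).eq_of_nhds) (fun x hx => hf1 x (le_of_lt hx))
  have hupper := hPI.variance_le hC hf
    (memLp_of_forall_mem_Icc_zero_one hf.continuous.aestronglyMeasurable hf01 2) hfB hS
    fun x hx => by simp [(hf0 x (not_lt.1 hx)).fderiv_eq]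
  have hsmall : C * (M * (2 / h * K) ^ 2) ≤ 1 / 4 :=
    calc C * (M * (2 / h * K) ^ 2) = 16 * C * M * K ^ 2 / h ^ 2 / 4 := by field_simp; ring
      _ ≤ h ^ 2 / h ^ 2 / 4 := by gcongr
      _ = 1 / 4 := by field_simp
  have := mul_le_mul_of_nonneg_right hsmall (measureReal_nonneg (μ := μ) (s := {x | a < G x}))
  nlinarith

end PoincareIneqPi

theorem le_half_mul_pow_of_le_mul_add {u : ℕ → ℝ} (hu : ∀ k, 0 ≤ u k) (h0 : u 0 ≤ 1 / 2)
    (hstep : ∀ k, u (k + 1) ≤ u k * (u k + 1 / 4)) (k : ℕ) : u k ≤ 1 / 2 * (3 / 4) ^ k := by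
  induction k with
  | zero => simpa using h0
  | succ k ih =>
    have hk : u k ≤ 1 / 2 := ih.trans (by
      have : ((3 : ℝ) / 4) ^ k ≤ 1 := pow_le_one₀ (by norm_num) (by norm_num)
      linarith)
    calc u (k + 1) ≤ u k * (3 / 4) := (hstep k).trans (by nlinarith [hu k])
      _ ≤ 1 / 2 * (3 / 4) ^ k * (3 / 4) := by nlinarith
      _ = 1 / 2 * (3 / 4) ^ (k + 1) := by ring

theorem Antitone.le_rpow_of_le_pow {τ : ℝ → ℝ} (hτ : Antitone τ) (hτ1 : ∀ t, τ t ≤ 1) {r h : ℝ}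
    (hr0 : 0 < r) (hr1 : r ≤ 1) (hh : 0 < h) (hk : ∀ k : ℕ, τ (k * h) ≤ r ^ (k + 1)) (t : ℝ) :
    τ t ≤ r ^ (t / h) := by
  rcases lt_or_ge t 0 with ht | ht
  · exact (hτ1 t).trans (Real.one_le_rpow_of_pos_of_le_one_of_nonpos hr0 hr1
      (div_nonpos_of_nonpos_of_nonneg ht.le hh.le))
  · set k := ⌊t / h⌋₊
    have hkt : k * h ≤ t := (le_div_iff₀ hh).1 (Nat.floor_le (div_nonneg ht hh.le))
    calc τ t ≤ τ (k * h) := hτ hkt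
      _ ≤ r ^ (k + 1) := hk k
      _ = r ^ ((k + 1 : ℕ) : ℝ) := (Real.rpow_natCast r (k + 1)).symm
      _ ≤ r ^ (t / h) := Real.rpow_le_rpow_of_exponent_ge hr0 hr1 (by
          push_cast; exact (Nat.lt_floor_add_one _).le)

theorem MeasureTheory.tendsto_measureReal_setOf_lt_atTop {Ω : Type*} [MeasurableSpace Ω]
    {μ : Measure Ω} [IsFiniteMeasure μ] {G : Ω → ℝ} (hG : Measurable G) :
    Tendsto (fun a => μ.real {x | a < G x}) atTop (𝓝 0) := by
  have hempty : ⋂ a : ℝ, {x | a < G x} = ∅ :=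
    eq_empty_of_forall_notMem fun x hx => lt_irrefl (G x) (mem_iInter.1 hx (G x))
  have h := tendsto_measure_iInter_atTop (μ := μ)
    (fun a => (measurableSet_lt measurable_const hG).nullMeasurableSet)
    (fun a b hab x (hx : b < G x) => (lt_of_le_of_lt hab hx : a < G x)) ⟨0, measure_ne_top μ _⟩
  rw [hempty, measure_empty] at h
  exact (ENNReal.tendsto_toReal ENNReal.zero_ne_top).comp h

namespace PoincareIneqPi

variable {M : ℕ} {μ : Measure (Fin M → ℝ)} [IsProbabilityMeasure μ] {C : ℝ} {K : ℝ≥0}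
  {G : (Fin M → ℝ) → ℝ} {h : ℝ}

theorem exists_measureReal_lt_le_rpow (hPI : PoincareIneqPi M μ C) (hC : 0 ≤ C)
    (hG : LipschitzWith K G) (hh : 0 < h) (hKh : 16 * C * M * K ^ 2 ≤ h ^ 2) :
    ∃ a, ∀ t, μ.real {x | a + t < G x} ≤ (3 / 4 : ℝ) ^ (t / h) := by
  obtain ⟨a, ha⟩ := ((tendsto_measureReal_setOf_lt_atTop (μ := μ)
    hG.continuous.measurable).eventually (ge_mem_nhds (by norm_num : (0 : ℝ) < 1 / 2))).exists
  have hgeom (k : ℕ) : μ.real {x | a + k * h < G x} ≤ 1 / 2 * (3 / 4) ^ k :=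
    le_half_mul_pow_of_le_mul_add (u := fun k : ℕ => μ.real {x | a + k * h < G x})
      (fun k => measureReal_nonneg) (by simpa using ha) (fun k => by
        simpa [add_mul, add_assoc] using hPI.measureReal_lt_add_le hC hG hh hKh (a + k * h)) k
  refine ⟨a, Antitone.le_rpow_of_le_pow
    (fun s t hst => measureReal_mono fun x (hx : a + t < G x) => (by linarith : a + s < G x))
    (fun t => measureReal_le_one) (by norm_num) (by norm_num) hh fun k => (hgeom k).trans ?_⟩
  rw [pow_succ]
  nlinarith [pow_pos (by norm_num : (0 : ℝ) < 3 / 4) k]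

theorem exists_measureReal_abs_sub_lt_le_rpow (hPI : PoincareIneqPi M μ C) (hC : 0 ≤ C)
    (hG : LipschitzWith K G) (hh : 0 < h) (hKh : 16 * C * M * K ^ 2 ≤ h ^ 2) (m : ℝ) :
    ∃ A > 0, ∀ ε, μ.real {x | ε < |G x - m|} ≤ A * (3 / 4 : ℝ) ^ (ε / h) := by
  obtain ⟨a₀, ha₀⟩ := hPI.exists_measureReal_lt_le_rpow hC hG hh hKh
  obtain ⟨a₁, ha₁⟩ := hPI.exists_measureReal_lt_le_rpow hC hG.neg hh hKh
  set r : ℝ := 3 / 4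
  refine ⟨r ^ ((m - a₀) / h) + r ^ ((-m - a₁) / h), by positivity, fun ε => ?_⟩
  have htwo_sided : {x | ε < |G x - m|} ⊆
      {x | a₀ + (m - a₀ + ε) < G x} ∪ {x | a₁ + (-m - a₁ + ε) < (-G) x} :=
    fun x (hx : ε < |G x - m|) => by
      rcases lt_abs.1 hx with hx | hx
      · exact Or.inl (show a₀ + (m - a₀ + ε) < G x by linarith)
      · exact Or.inr (show a₁ + (-m - a₁ + ε) < -G x by linarith)
  calc μ.real {x | ε < |G x - m|}
      ≤ μ.real {x | a₀ + (m - a₀ + ε) < G x} + μ.real {x | a₁ + (-m - a₁ + ε) < (-G) x} :=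
        (measureReal_mono htwo_sided).trans (measureReal_union_le _ _)
    _ ≤ r ^ ((m - a₀ + ε) / h) + r ^ ((-m - a₁ + ε) / h) := add_le_add (ha₀ _) (ha₁ _)
    _ = (r ^ ((m - a₀) / h) + r ^ ((-m - a₁) / h)) * r ^ (ε / h) := by
        rw [add_div, add_div _ ε, Real.rpow_add (by norm_num), Real.rpow_add (by norm_num)]; ring

end PoincareIneqPi

/-- Exponential concentration from a Poincaré inequality (Gromov–Milman / Herbst):
if `μ` satisfies a Poincaré inequality with constant `C > 0` and `F` is Lipschitz with
constant `L > 0`, then there are constants `K₁, K₂ > 0` with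
`μ(|F − E_μ F| > ε) ≤ K₁ exp(−ε / (K₂ √C L))` for every `ε > 0`. -/
theorem poincare_exponential_concentration
    (M : ℕ) (μ : Measure (Fin M → ℝ)) [IsProbabilityMeasure μ]
    (C : ℝ) (hC : 0 < C) (hPI : PoincareIneqPi M μ C)
    (F : (Fin M → ℝ) → ℝ) (L : ℝ) (hL : 0 < L)
    (hF : ∀ x y, |F x - F y| ≤ L * dist x y) :
    ∃ K₁ > (0 : ℝ), ∃ K₂ > (0 : ℝ), ∀ ε : ℝ, 0 < ε →
      (μ {x | ε < |F x - ∫ y, F y ∂μ|}).toReal ≤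
        K₁ * Real.exp (-ε / (K₂ * Real.sqrt C * L)) := by
  have hF_lip : LipschitzWith (Real.toNNReal L) F := LipschitzWith.of_dist_le_mul fun x y => by
    rw [Real.coe_toNNReal _ hL.le, Real.dist_eq]; exact hF x y
  set h := 4 * Real.sqrt (M + 1) * Real.sqrt C * L
  have hKh : 16 * C * M * (Real.toNNReal L : ℝ) ^ 2 ≤ h ^ 2 := by
    rw [Real.coe_toNNReal _ hL.le, mul_pow, mul_pow, mul_pow, Real.sq_sqrt (by positivity),
      Real.sq_sqrt hC.le]
    nlinarith [mul_pos hC (pow_pos hL 2)]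
  obtain ⟨A, hA, hconc⟩ := hPI.exists_measureReal_abs_sub_lt_le_rpow hC.le hF_lip
    (by positivity) hKh (∫ y, F y ∂μ)
  have hlog : 0 < Real.log (4 / 3) := Real.log_pos (by norm_num)
  refine ⟨A, hA, 4 * Real.sqrt (M + 1) / Real.log (4 / 3), by positivity, fun ε _ => ?_⟩
  refine (hconc ε).trans_eq (congrArg (A * ·) ?_)
  rw [Real.rpow_def_of_pos (by norm_num), show (3 / 4 : ℝ) = (4 / 3)⁻¹ by norm_num, Real.log_inv]
  congr 1
  simp only [h]
  field_simp
end
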